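/- Let L/F be a finite Galois extension with group Δ = Gal(L/F). Then for the multiplicative group, (𝕀_L)^Δ = 𝕀_F, i.e., the Δ-invariant ideles of L are exactly the ideles of F. -/

import Mathlib

open scoped TensorProduct
open NumberField

/-- Let `L/F` be a finite Galois extension of number fields with Galois group
`Δ = Gal(L/F)`.  Realizing the adele ring of `L` as the base change
`𝔸_L = 𝔸_F ⊗[F] L`, the group `Δ` acts on `𝔸_L` through the second factor, and hence
on the idele group `𝕀_L = (𝔸_F ⊗[F] L)ˣ`.  Then the `Δ`-invariant ideles of `L` are
exactly the ideles of `F`: the fixed points of `Δ` on `𝕀_L` are precisely the image of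
the diagonal embedding `𝕀_F = (𝔸_F)ˣ → 𝕀_L`. -/
theorem idele_galois_invariants
    (F L : Type*) [Field F] [NumberField F] [Field L] [NumberField L]
    [Algebra F L] [FiniteDimensional F L] [IsGalois F L]
    (x : (AdeleRing (𝓞 F) F ⊗[F] L)ˣ) :
    (∀ σ : L ≃ₐ[F] L,
        Units.map (Algebra.TensorProduct.map (AlgHom.id F (AdeleRing (𝓞 F) F))
          σ.toAlgHom).toMonoidHom x = x) ↔
      x ∈ Set.range (Units.map
        (Algebra.TensorProduct.includeLeft :
          AdeleRing (𝓞 F) F →ₐ[F] AdeleRing (𝓞 F) F ⊗[F] L).toMonoidHom) := by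
  classical
  set A := AdeleRing (𝓞 F) F with hA
  set n := Module.finrank F L with hnd
  have hn : (n : F) ≠ 0 := Nat.cast_ne_zero.mpr Module.finrank_pos.ne'
  -- averaged trace, a projection L → F with c 1 = 1
  set c : L →ₗ[F] F := (n : F)⁻¹ • (Algebra.trace F L) with hc
  have hc1 : c 1 = 1 := by
    have : Algebra.trace F L 1 = n • (1 : F) := by
      simpa using Algebra.trace_algebraMap (R := F) (S := L) (1 : F)
    simp [hc, this, inv_mul_cancel₀ hn]
  have hcalg : ∀ l : L, algebraMap F L (c l)
      = (n : F)⁻¹ • ∑ σ : L ≃ₐ[F] L, σ l := by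
    intro l
    rw [hc]
    simp only [LinearMap.smul_apply, map_smul, ← trace_eq_sum_automorphisms]
    rw [Algebra.smul_def, Algebra.smul_def]
    simp [map_mul]
  -- retraction g : A ⊗ L → A
  set g : (A ⊗[F] L) →ₗ[F] A :=
    (TensorProduct.rid F A).toLinearMap ∘ₗ LinearMap.lTensor A c with hg
  have hret : ∀ a : A, g ((Algebra.TensorProduct.includeLeft :
      A →ₐ[F] A ⊗[F] L) a) = a := by
    intro a
    simp [hg, Algebra.TensorProduct.includeLeft_apply, hc1]
  have hinj : Function.Injective (Algebra.TensorProduct.includeLeft :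
      A →ₐ[F] A ⊗[F] L) := by
    intro a b hab
    have := congrArg g hab
    rwa [hret, hret] at this
  -- key linear identity
  have hlin : (Algebra.TensorProduct.includeLeft :
        A →ₐ[F] A ⊗[F] L).toLinearMap ∘ₗ g
      = (n : F)⁻¹ • ∑ σ : L ≃ₐ[F] L,
          (Algebra.TensorProduct.map (AlgHom.id F A) σ.toAlgHom).toLinearMap := by
    apply TensorProduct.ext'
    intro a l
    simp only [LinearMap.comp_apply, hg, LinearMap.lTensor_tmul,
      LinearEquiv.coe_coe, TensorProduct.rid_tmul, AlgHom.toLinearMap_apply,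
      Algebra.TensorProduct.includeLeft_apply, LinearMap.smul_apply,
      LinearMap.sum_apply, Algebra.TensorProduct.map_tmul, AlgHom.coe_id,
      id_eq, AlgEquiv.toAlgHom_eq_coe, AlgHom.coe_coe]
    rw [TensorProduct.smul_tmul, ← TensorProduct.tmul_sum,
      TensorProduct.smul_tmul', TensorProduct.smul_tmul, ← Algebra.algebraMap_eq_smul_one, hcalg l]
    rfl
  have key : ∀ z : A ⊗[F] L,
      (∀ σ : L ≃ₐ[F] L,
        Algebra.TensorProduct.map (AlgHom.id F A) σ.toAlgHom z = z) →
      (Algebra.TensorProduct.includeLeft : A →ₐ[F] A ⊗[F] L) (g z) = z := by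
    intro z hz
    have h1 : (Algebra.TensorProduct.includeLeft :
        A →ₐ[F] A ⊗[F] L) (g z)
        = (n : F)⁻¹ • ∑ σ : L ≃ₐ[F] L,
            Algebra.TensorProduct.map (AlgHom.id F A) σ.toAlgHom z := by
      have := congrFun (congrArg DFunLike.coe hlin) z
      simpa only [LinearMap.comp_apply, LinearMap.smul_apply, LinearMap.sum_apply,
        AlgHom.toLinearMap_apply] using this
    rw [h1]
    have h2 : ∑ σ : L ≃ₐ[F] L,
        Algebra.TensorProduct.map (AlgHom.id F A) σ.toAlgHom z
        = (Fintype.card (L ≃ₐ[F] L)) • z := by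
      rw [Finset.sum_congr rfl fun σ _ => hz σ]
      simp
    rw [h2, ← Nat.card_eq_fintype_card, IsGalois.card_aut_eq_finrank, ← hnd,
      ← Nat.cast_smul_eq_nsmul F, smul_smul, inv_mul_cancel₀ hn, one_smul]
  constructor
  · intro hfix
    have hxval : ∀ σ : L ≃ₐ[F] L,
        Algebra.TensorProduct.map (AlgHom.id F A) σ.toAlgHom (x : A ⊗[F] L)
          = (x : A ⊗[F] L) := fun σ => congrArg Units.val (hfix σ)
    have hxinv : ∀ σ : L ≃ₐ[F] L,
        Algebra.TensorProduct.map (AlgHom.id F A) σ.toAlgHom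
          ((x⁻¹ : (A ⊗[F] L)ˣ) : A ⊗[F] L)
          = ((x⁻¹ : (A ⊗[F] L)ˣ) : A ⊗[F] L) := by
      intro σ
      have : Units.map (Algebra.TensorProduct.map (AlgHom.id F A)
          σ.toAlgHom).toMonoidHom x⁻¹ = x⁻¹ := by
        rw [map_inv, hfix σ]
      exact congrArg Units.val this
    have ha := key _ hxval
    have hb := key _ hxinv
    refine ⟨⟨g (x : A ⊗[F] L), g ((x⁻¹ : (A ⊗[F] L)ˣ) : A ⊗[F] L), ?_, ?_⟩, ?_⟩
    · apply hinj
      rw [map_mul, ha, hb]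
      simp only [Units.mul_inv, map_one]
    · apply hinj
      rw [map_mul, ha, hb]
      simp only [Units.inv_mul, map_one]
    · exact Units.ext ha
  · rintro ⟨y, rfl⟩ σ
    apply Units.ext
    show Algebra.TensorProduct.map (AlgHom.id F A) σ.toAlgHom
      ((Algebra.TensorProduct.includeLeft : A →ₐ[F] A ⊗[F] L) y) = _
    simp [Algebra.TensorProduct.includeLeft_apply]
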